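/- arXiv:2301.04452 — 2 statements merged into one kernel-verified Lean document; each statement's English description precedes it below -/
import Mathlib

section
/- Let F and G be nonempty finite subsets of ℝⁿ (Euclidean distance) with F ∩ G = ∅ in the sense that D(x,F) < D(x,G) for a point x (x is safe). Define S̄(x) = min_{x''∈G} max_{x'∈F} (d(x,x'')² − d(x,x')²)/(2·d(x',x'')). Then for every y with d(x,y) < S̄(x), we have D(y,F) < D(y,G). -/
open scoped RealInnerProductSpace

theorem stmt_5 (n : ℕ) (F G : Finset (EuclideanSpace ℝ (Fin n)))
    (hF : F.Nonempty) (hG : G.Nonempty) (x : EuclideanSpace ℝ (Fin n))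
    (hsafe : Metric.infDist x (F : Set (EuclideanSpace ℝ (Fin n))) <
      Metric.infDist x (G : Set (EuclideanSpace ℝ (Fin n))))
    (y : EuclideanSpace ℝ (Fin n))
    (hy : dist x y <
      G.inf' hG fun x'' => F.sup' hF fun x' =>
        (dist x x'' ^ 2 - dist x x' ^ 2) / (2 * dist x' x'')) :
    Metric.infDist y (F : Set (EuclideanSpace ℝ (Fin n))) <
      Metric.infDist y (G : Set (EuclideanSpace ℝ (Fin n))) := by
  -- get the minimizer g ∈ G for infDist y G
  have hGc : IsCompact (G : Set (EuclideanSpace ℝ (Fin n))) := G.finite_toSet.isCompact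
  obtain ⟨g, hgG, hgeq⟩ := hGc.exists_infDist_eq_dist (by exact_mod_cast hG.to_set) y
  -- hy at g
  have hy' : dist x y < F.sup' hF fun x' =>
      (dist x g ^ 2 - dist x x' ^ 2) / (2 * dist x' g) :=
    lt_of_lt_of_le hy (Finset.inf'_le _ hgG)
  obtain ⟨f, hfF, hfeq⟩ := Finset.exists_mem_eq_sup' hF
    (fun x' => (dist x g ^ 2 - dist x x' ^ 2) / (2 * dist x' g))
  rw [hfeq] at hy'
  have hdfg : 0 < dist f g := by
    rcases eq_or_lt_of_le (dist_nonneg : (0:ℝ) ≤ dist f g) with h | h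
    · exfalso
      rw [← h] at hy'
      simp at hy'
      exact absurd hy' (not_lt.mpr dist_nonneg)
    · exact h
  have hnum : 2 * dist f g * dist x y < dist x g ^ 2 - dist x f ^ 2 := by
    rw [lt_div_iff₀ (by positivity)] at hy'
    linarith
  -- key identity
  have key : dist y g ^ 2 - dist y f ^ 2
      = dist x g ^ 2 - dist x f ^ 2 + 2 * ⟪y - x, f - g⟫ := by
    have h1 : dist y g ^ 2 = dist x y ^ 2 + 2 * ⟪y - x, x - g⟫ + dist x g ^ 2 := by
      have : y - g = (y - x) + (x - g) := by abel
      rw [dist_eq_norm, this, norm_add_sq_real, ← dist_eq_norm, ← dist_eq_norm,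
        dist_comm y x]
    have h2 : dist y f ^ 2 = dist x y ^ 2 + 2 * ⟪y - x, x - f⟫ + dist x f ^ 2 := by
      have : y - f = (y - x) + (x - f) := by abel
      rw [dist_eq_norm, this, norm_add_sq_real, ← dist_eq_norm, ← dist_eq_norm,
        dist_comm y x]
    have h3 : ⟪y - x, x - g⟫ - ⟪y - x, x - f⟫ = ⟪y - x, f - g⟫ := by
      rw [← inner_sub_right]; congr 1; abel
    linarith
  have hip : -(dist x y * dist f g) ≤ ⟪y - x, f - g⟫ := by
    have := abs_real_inner_le_norm (y - x) (f - g)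
    rw [← dist_eq_norm, ← dist_eq_norm, dist_comm y x] at this
    have := abs_le.mp this
    linarith [this.1]
  have hlt : dist y f < dist y g := by
    have hsq : dist y f ^ 2 < dist y g ^ 2 := by nlinarith
    exact lt_of_pow_lt_pow_left₀ 2 dist_nonneg hsq
  calc Metric.infDist y (F : Set (EuclideanSpace ℝ (Fin n)))
      ≤ dist y f := Metric.infDist_le_dist_of_mem (by exact_mod_cast hfF)
    _ < dist y g := hlt
    _ = Metric.infDist y (G : Set (EuclideanSpace ℝ (Fin n))) := hgeq.symm
end

section
/- Let F, G be nonempty finite subsets of ℝⁿ and x a point with D(x,F) < D(x,G). Define the fast-separation S(x) = (D(x,G) − D(x,F))/2 and the separation S̄(x) = min_{x''∈G} max_{x'∈F} (d(x,x'')² − d(x,x')²)/(2·d(x',x'')). Then S(x) ≤ S̄(x). -/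
theorem stmt_7 (n : ℕ) (F G : Finset (EuclideanSpace ℝ (Fin n)))
    (hF : F.Nonempty) (hG : G.Nonempty) (x : EuclideanSpace ℝ (Fin n))
    (hsafe : Metric.infDist x (F : Set (EuclideanSpace ℝ (Fin n))) <
      Metric.infDist x (G : Set (EuclideanSpace ℝ (Fin n)))) :
    (Metric.infDist x (G : Set (EuclideanSpace ℝ (Fin n))) -
      Metric.infDist x (F : Set (EuclideanSpace ℝ (Fin n)))) / 2 ≤
    G.inf' hG fun x'' => F.sup' hF fun x' =>
      (dist x x'' ^ 2 - dist x x' ^ 2) / (2 * dist x' x'') := by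
  apply Finset.le_inf'
  intro x'' hx''
  obtain ⟨x', hx', hmin⟩ := F.exists_min_image (fun y => dist x y) hF
  have hDF : Metric.infDist x (F : Set (EuclideanSpace ℝ (Fin n))) = dist x x' := by
    apply le_antisymm
    · exact Metric.infDist_le_dist_of_mem (by exact_mod_cast hx')
    · by_contra h
      push_neg at h
      obtain ⟨y, hy, hlt⟩ := (Metric.infDist_lt_iff (by exact_mod_cast hF)).1 h
      exact absurd (hmin y (by exact_mod_cast hy)) (not_le.2 hlt)
  have hDG : Metric.infDist x (G : Set (EuclideanSpace ℝ (Fin n))) ≤ dist x x'' :=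
    Metric.infDist_le_dist_of_mem (by exact_mod_cast hx'')
  have hab : dist x x' < dist x x'' := lt_of_lt_of_le (hDF ▸ hsafe) hDG
  have hc : 0 < dist x' x'' := by
    rw [dist_pos]
    rintro rfl
    exact lt_irrefl _ hab
  have htri : dist x' x'' ≤ dist x' x + dist x x'' := dist_triangle _ _ _
  apply Finset.le_sup'_of_le _ hx'
  rw [hDF, div_le_div_iff₀ (by norm_num) (by positivity)]
  have h0 : 0 ≤ dist x x' := dist_nonneg
  rw [dist_comm x' x] at htri
  nlinarith [hab, hc, htri, hDG]
end
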